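/- Let n ≥ 2, q ∈ ℂ \ {0}, p ∣ r with d = r/p, let ξ ∈ ℂ be a primitive p-th root of unity, let v_0,…,v_{d−1} ∈ ℂ, and define u_1,…,u_r by u_{lp+k+1} = ξ^k v_l for 0 ≤ k ≤ p−1, 0 ≤ l ≤ d−1. Then there exists a unique ℂ-algebra homomorphism τ : ℋ_{r,1,n}(u_1,…,u_r,q) → ℋ_{r,1,n}(u_1,…,u_r,q) satisfying τ(T_1) = ξ·T_1 and τ(T_i) = T_i for 2 ≤ i ≤ n; moreover τ^p = id, so τ is an algebra automorphism and generates an action of ℤ/pℤ on ℋ_{r,1,n}(u_1,…,u_r,q) by algebra automorphisms. -/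
import Mathlib


/-!
STATEMENT 4: Let n ≥ 2, q ∈ ℂ∖{0}, p ∣ r with d = r/p, ξ ∈ ℂ a primitive p-th
root of unity, v_0,…,v_{d−1} ∈ ℂ, and u_{lp+k+1} = ξ^k v_l.  Then there is a
unique ℂ-algebra homomorphism τ of ℋ_{r,1,n}(u_1,…,u_r,q) with τ(T_1) = ξ·T_1
and τ(T_i) = T_i for 2 ≤ i ≤ n; moreover τ^p = id, so τ is an algebra
automorphism and generates an action of ℤ/pℤ by algebra automorphisms.
-/

noncomputable section

open FreeAlgebra
noncomputable section

open FreeAlgebra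

/-- Defining relations of the cyclotomic Hecke algebra ℋ_{r,1,n}(u_1,…,u_r,q).
The generator `ι ℂ i` for `i : Fin n` represents `T_{i+1}`; `u j` denotes
`u_{j+1}` (0-indexed). -/
inductive CycloRel (n r : ℕ) (q : ℂ) (u : ℕ → ℂ) :
    FreeAlgebra ℂ (Fin n) → FreeAlgebra ℂ (Fin n) → Prop
  | comm (i j : Fin n) (h : (i : ℕ) + 1 < (j : ℕ)) :
      CycloRel n r q u (ι ℂ i * ι ℂ j) (ι ℂ j * ι ℂ i)
  | braid (i j : Fin n) (hi : 1 ≤ (i : ℕ)) (hj : (j : ℕ) = (i : ℕ) + 1) :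
      CycloRel n r q u (ι ℂ i * ι ℂ j * ι ℂ i) (ι ℂ j * ι ℂ i * ι ℂ j)
  | quartic (i j : Fin n) (hi : (i : ℕ) = 0) (hj : (j : ℕ) = 1) :
      CycloRel n r q u (ι ℂ i * ι ℂ j * ι ℂ i * ι ℂ j) (ι ℂ j * ι ℂ i * ι ℂ j * ι ℂ i)
  | cyclotomic (i : Fin n) (hi : (i : ℕ) = 0) :
      CycloRel n r q u
        (((List.range r).map (fun k => ι ℂ i - algebraMap ℂ (FreeAlgebra ℂ (Fin n)) (u k))).prod) 0
  | quadratic (i : Fin n) (hi : 1 ≤ (i : ℕ)) :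
      CycloRel n r q u ((ι ℂ i - 1) * (ι ℂ i + algebraMap ℂ (FreeAlgebra ℂ (Fin n)) q)) 0

/-- The cyclotomic Hecke algebra ℋ_{r,1,n}(u_1,…,u_r,q). -/
abbrev CyclotomicHecke (n r : ℕ) (q : ℂ) (u : ℕ → ℂ) :=
  RingQuot (CycloRel n r q u)

/-- The generator `T_{i+1}` of the cyclotomic Hecke algebra (`heckeT … 0 = T_1`). -/
def heckeT (n r : ℕ) (q : ℂ) (u : ℕ → ℂ) (i : Fin n) : CyclotomicHecke n r q u :=
  RingQuot.mkAlgHom ℂ (CycloRel n r q u) (ι ℂ i)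

-- sanity checks

section
open Polynomial

namespace CycloAux



/-- The cyclotomic polynomial product. -/
noncomputable def Q (r : ℕ) (u : ℕ → ℂ) : ℂ[X] :=
  ((List.range r).map (fun k => (X : ℂ[X]) - C (u k))).prod

lemma aeval_Q {A : Type*} [Ring A] [Algebra ℂ A] (r : ℕ) (u : ℕ → ℂ) (x : A) :
    Polynomial.aeval x (Q r u)
      = ((List.range r).map (fun k => x - algebraMap ℂ A (u k))).prod := by
  rw [Q, map_list_prod, List.map_map]
  congr 1
  simp [Function.comp]

lemma list_prod_eq (r : ℕ) (u : ℕ → ℂ) :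
    Q r u = ∏ k ∈ Finset.range r, ((X : ℂ[X]) - C (u k)) := by
  induction r with
  | zero => simp [Q]
  | succ r ih =>
      rw [Q, List.range_succ, List.map_append, List.prod_append, Finset.prod_range_succ, ← Q, ih]
      simp

lemma prod_range_mul {M : Type*} [CommMonoid M] (p d : ℕ) (f : ℕ → M) :
    ∏ k ∈ Finset.range (p * d), f k
      = ∏ l ∈ Finset.range d, ∏ k ∈ Finset.range p, f (l * p + k) := by
  induction d with
  | zero => simp
  | succ d ih =>
      rw [Nat.mul_succ, Finset.prod_range_add, ih, Finset.prod_range_succ]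
      congr 1
      exact Finset.prod_congr rfl fun k _ => by rw [Nat.mul_comm]

lemma Q_eq (p d : ℕ) (hp : 0 < p) (ξ : ℂ) (hξ : IsPrimitiveRoot ξ p)
    (v u : ℕ → ℂ) (hu : ∀ k l : ℕ, k < p → l < d → u (l * p + k) = ξ ^ k * v l) :
    Q (p * d) u = ∏ l ∈ Finset.range d, ((X : ℂ[X]) ^ p - C (v l ^ p)) := by
  rw [list_prod_eq, prod_range_mul]
  refine Finset.prod_congr rfl fun l hl => ?_
  rw [X_pow_sub_C_eq_prod hξ hp (rfl : v l ^ p = v l ^ p)]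
  refine Finset.prod_congr rfl fun k hk => ?_
  rw [hu k l (Finset.mem_range.mp hk) (Finset.mem_range.mp hl)]

lemma Q_comp (p d : ℕ) (hp : 0 < p) (ξ : ℂ) (hξ : IsPrimitiveRoot ξ p)
    (v u : ℕ → ℂ) (hu : ∀ k l : ℕ, k < p → l < d → u (l * p + k) = ξ ^ k * v l) :
    (Q (p * d) u).comp (C ξ * X) = Q (p * d) u := by
  rw [Q_eq p d hp ξ hξ v u hu, prod_comp]
  refine Finset.prod_congr rfl fun l _ => ?_
  rw [sub_comp, pow_comp, X_comp, C_comp, mul_pow, ← C_pow, hξ.pow_eq_one, C_1, one_mul]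

lemma aeval_smul_Q {A : Type*} [Ring A] [Algebra ℂ A] (p d : ℕ) (hp : 0 < p)
    (ξ : ℂ) (hξ : IsPrimitiveRoot ξ p)
    (v u : ℕ → ℂ) (hu : ∀ k l : ℕ, k < p → l < d → u (l * p + k) = ξ ^ k * v l)
    (x : A) :
    Polynomial.aeval (ξ • x) (Q (p * d) u) = Polynomial.aeval x (Q (p * d) u) := by
  have h1 : Polynomial.aeval x (C ξ * X : ℂ[X]) = ξ • x := by
    simp [Algebra.smul_def]
  conv_lhs => rw [← h1, ← Polynomial.aeval_comp, Q_comp p d hp ξ hξ v u hu]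

end CycloAux

namespace CycloAux

variable {n r : ℕ} {q : ℂ} {u : ℕ → ℂ}

lemma heckeExt {B : Type*} [Semiring B] [Algebra ℂ B]
    (f g : CyclotomicHecke n r q u →ₐ[ℂ] B)
    (h : ∀ i, f (heckeT n r q u i) = g (heckeT n r q u i)) : f = g := by
  have key : f.comp (RingQuot.mkAlgHom ℂ (CycloRel n r q u))
      = g.comp (RingQuot.mkAlgHom ℂ (CycloRel n r q u)) := by
    apply FreeAlgebra.hom_ext
    funext i
    simpa [heckeT] using h i
  refine DFunLike.ext _ _ fun x => ?_
  obtain ⟨y, rfl⟩ := RingQuot.mkAlgHom_surjective ℂ (CycloRel n r q u) x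
  exact DFunLike.congr_fun key y

lemma twist_respects (n p d r : ℕ) (hp : 1 ≤ p) (hr : r = p * d)
    (q : ℂ) (ξ : ℂ) (hξ : IsPrimitiveRoot ξ p) (v u : ℕ → ℂ)
    (hu : ∀ k l : ℕ, k < p → l < d → u (l * p + k) = ξ ^ k * v l) :
    ∀ ⦃x y : FreeAlgebra ℂ (Fin n)⦄, CycloRel n r q u x y →
      (FreeAlgebra.lift ℂ
        (fun i : Fin n => (if (i : ℕ) = 0 then ξ else 1) • heckeT n r q u i)) x
      = (FreeAlgebra.lift ℂ
        (fun i : Fin n => (if (i : ℕ) = 0 then ξ else 1) • heckeT n r q u i)) y := by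
  set c : Fin n → ℂ := fun i => if (i : ℕ) = 0 then ξ else 1 with hc
  set φ := FreeAlgebra.lift ℂ (fun i : Fin n => c i • heckeT n r q u i) with hφ
  have hφι : ∀ i, φ (ι ℂ i) = c i • heckeT n r q u i := fun i => by
    rw [hφ, FreeAlgebra.lift_ι_apply]
  have hM : ∀ x : FreeAlgebra ℂ (Fin n),
      RingQuot.mkAlgHom ℂ (CycloRel n r q u) x = RingQuot.mkAlgHom ℂ (CycloRel n r q u) x := fun _ => rfl
  rintro x y hxy
  induction hxy with
  | comm i j h =>
      have key : heckeT n r q u i * heckeT n r q u j = heckeT n r q u j * heckeT n r q u i := by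
        have := RingQuot.mkAlgHom_rel ℂ (CycloRel.comm (n := n) (r := r) (q := q) (u := u) i j h)
        simpa [heckeT, map_mul] using this
      simp only [map_mul, hφι, smul_mul_assoc, mul_smul_comm, smul_smul, key]
      rw [mul_comm (c j) (c i)]
  | braid i j hi hj =>
      have hi' : (i:ℕ) ≠ 0 := by omega
      have hj' : (j:ℕ) ≠ 0 := by omega
      have hci : c i = 1 := by simp [hc, hi']
      have hcj : c j = 1 := by simp [hc, hj']
      have key := RingQuot.mkAlgHom_rel ℂ (CycloRel.braid (n := n) (r := r) (q := q) (u := u) i j hi hj)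
      simp only [map_mul, hφι, hci, hcj, one_smul]
      simpa [heckeT, map_mul] using key
  | quartic i j hi hj =>
      have hci : c i = ξ := by simp [hc, hi]
      have hcj : c j = 1 := by simp [hc, hj]
      have key : heckeT n r q u i * heckeT n r q u j * heckeT n r q u i * heckeT n r q u j
          = heckeT n r q u j * heckeT n r q u i * heckeT n r q u j * heckeT n r q u i := by
        have := RingQuot.mkAlgHom_rel ℂ (CycloRel.quartic (n := n) (r := r) (q := q) (u := u) i j hi hj)
        simpa [heckeT, map_mul] using this
      simp only [map_mul, hφι, hci, hcj, one_smul, smul_mul_assoc, mul_smul_comm, smul_smul, key]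
  | cyclotomic i hi =>
      have hci : c i = ξ := by simp [hc, hi]
      have h1 : ((List.range r).map
            (fun k => ι ℂ i - algebraMap ℂ (FreeAlgebra ℂ (Fin n)) (u k))).prod
          = Polynomial.aeval (ι ℂ i) (Q r u) := (aeval_Q r u _).symm
      rw [map_zero, h1, ← Polynomial.aeval_algHom_apply, hφι, hci]
      rw [hr] at *
      rw [aeval_smul_Q p d hp ξ hξ v u hu]
      have key := RingQuot.mkAlgHom_rel ℂ
        (CycloRel.cyclotomic (n := n) (r := p * d) (q := q) (u := u) i hi)
      rw [h1, map_zero, ← Polynomial.aeval_algHom_apply] at key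
      exact key
  | quadratic i hi =>
      have hi' : (i:ℕ) ≠ 0 := by omega
      have hci : c i = 1 := by simp [hc, hi']
      have key := RingQuot.mkAlgHom_rel ℂ (CycloRel.quadratic (n := n) (r := r) (q := q) (u := u) i hi)
      simp only [map_mul, map_sub, map_add, map_one, hφι, hci, one_smul, map_zero,
        AlgHom.commutes] at key ⊢
      simpa [heckeT] using key


noncomputable def twistHom (n p d r : ℕ) (hp : 1 ≤ p) (hr : r = p * d)
    (q : ℂ) (ξ : ℂ) (hξ : IsPrimitiveRoot ξ p) (v u : ℕ → ℂ)
    (hu : ∀ k l : ℕ, k < p → l < d → u (l * p + k) = ξ ^ k * v l) :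
    CyclotomicHecke n r q u →ₐ[ℂ] CyclotomicHecke n r q u :=
  RingQuot.liftAlgHom ℂ ⟨FreeAlgebra.lift ℂ
    (fun i : Fin n => (if (i : ℕ) = 0 then ξ else 1) • heckeT n r q u i),
    twist_respects n p d r hp hr q ξ hξ v u hu⟩

lemma twistHom_T (n p d r : ℕ) (hp : 1 ≤ p) (hr : r = p * d)
    (q : ℂ) (ξ : ℂ) (hξ : IsPrimitiveRoot ξ p) (v u : ℕ → ℂ)
    (hu : ∀ k l : ℕ, k < p → l < d → u (l * p + k) = ξ ^ k * v l) (i : Fin n) :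
    twistHom n p d r hp hr q ξ hξ v u hu (heckeT n r q u i)
      = (if (i : ℕ) = 0 then ξ else 1) • heckeT n r q u i := by
  rw [heckeT, twistHom, RingQuot.liftAlgHom_mkAlgHom_apply, FreeAlgebra.lift_ι_apply, heckeT]

end CycloAux

end

theorem cyclotomicHecke_twist_automorphism
    (n p d r : ℕ) (hn : 2 ≤ n) (hp : 1 ≤ p) (hr : r = p * d)
    (q : ℂ) (hq : q ≠ 0)
    (ξ : ℂ) (hξ : IsPrimitiveRoot ξ p)
    (v : ℕ → ℂ) (u : ℕ → ℂ)
    (hu : ∀ k l : ℕ, k < p → l < d → u (l * p + k) = ξ ^ k * v l) :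
    (∃! τ : CyclotomicHecke n r q u →ₐ[ℂ] CyclotomicHecke n r q u,
      τ (heckeT n r q u ⟨0, by omega⟩) = ξ • heckeT n r q u ⟨0, by omega⟩ ∧
      ∀ i : Fin n, 1 ≤ (i : ℕ) → τ (heckeT n r q u i) = heckeT n r q u i) ∧
    (∀ τ : CyclotomicHecke n r q u →ₐ[ℂ] CyclotomicHecke n r q u,
      (τ (heckeT n r q u ⟨0, by omega⟩) = ξ • heckeT n r q u ⟨0, by omega⟩ ∧
        ∀ i : Fin n, 1 ≤ (i : ℕ) → τ (heckeT n r q u i) = heckeT n r q u i) →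
      (∀ x : CyclotomicHecke n r q u, (⇑τ)^[p] x = x) ∧
      (∃ τe : CyclotomicHecke n r q u ≃ₐ[ℂ] CyclotomicHecke n r q u,
        ⇑τe = ⇑τ ∧
        ∃ ρ : Multiplicative (ZMod p) →*
            (CyclotomicHecke n r q u ≃ₐ[ℂ] CyclotomicHecke n r q u),
          ρ (Multiplicative.ofAdd (1 : ZMod p)) = τe)) := by
  have hξp : ξ ^ p = 1 := hξ.pow_eq_one
  set T : Fin n → CyclotomicHecke n r q u := heckeT n r q u with hT
  set T0 : CyclotomicHecke n r q u := heckeT n r q u ⟨0, by omega⟩ with hT0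
  -- the candidate homomorphism
  set τ₀ := CycloAux.twistHom n p d r hp hr q ξ hξ v u hu with hτ₀
  have hτ₀T := CycloAux.twistHom_T n p d r hp hr q ξ hξ v u hu
  have cond₀ : τ₀ T0 = ξ • T0 ∧ ∀ i : Fin n, 1 ≤ (i : ℕ) → τ₀ (T i) = T i := by
    constructor
    · rw [hT0, hτ₀T]; simp
    · intro i hi
      rw [hT, hτ₀T]
      have : (i : ℕ) ≠ 0 := by omega
      simp [this]
  -- uniqueness of homomorphisms with the defining property
  have uniq : ∀ σ σ' : CyclotomicHecke n r q u →ₐ[ℂ] CyclotomicHecke n r q u,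
      (σ T0 = ξ • T0 ∧ ∀ i : Fin n, 1 ≤ (i : ℕ) → σ (T i) = T i) →
      (σ' T0 = ξ • T0 ∧ ∀ i : Fin n, 1 ≤ (i : ℕ) → σ' (T i) = T i) → σ = σ' := by
    intro σ σ' h h'
    apply CycloAux.heckeExt
    intro i
    by_cases hiz : (i : ℕ) = 0
    · have : i = ⟨0, by omega⟩ := Fin.ext (by simpa using hiz)
      rw [this]
      rw [← hT0, h.1, h'.1]
    · have hi1 : 1 ≤ (i : ℕ) := by omega
      rw [← hT, h.2 i hi1, h'.2 i hi1]
  refine ⟨⟨τ₀, cond₀, fun σ hσ => uniq σ τ₀ hσ cond₀⟩, ?_⟩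
  intro τ hτc
  -- iterates on generators
  have hiter0 : ∀ m : ℕ, (⇑τ)^[m] T0 = ξ ^ m • T0 := by
    intro m
    induction m with
    | zero => simp
    | succ m ih =>
        rw [Function.iterate_succ_apply', ih, map_smul, hτc.1, smul_smul, pow_succ, mul_comm]
  have hiteri : ∀ (m : ℕ) (i : Fin n), 1 ≤ (i : ℕ) → (⇑τ)^[m] (T i) = T i := by
    intro m i hi
    induction m with
    | zero => simp
    | succ m ih => rw [Function.iterate_succ_apply', ih, hτc.2 i hi]
  -- coercion of powers of an algebra endomorphism
  have coe_pow : ∀ m : ℕ, ⇑(τ ^ m) = (⇑τ)^[m] := by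
    intro m
    induction m with
    | zero => funext x; simp
    | succ m ih => funext x; rw [pow_succ', AlgHom.mul_apply, Function.iterate_succ_apply', ← ih]
  have hτp : τ ^ p = AlgHom.id ℂ (CyclotomicHecke n r q u) := by
    apply CycloAux.heckeExt
    intro i
    rw [AlgHom.coe_id, id_eq, coe_pow]
    by_cases hiz : (i : ℕ) = 0
    · have : i = ⟨0, by omega⟩ := Fin.ext (by simpa using hiz)
      rw [this, ← hT0, hiter0 p, hξp, one_smul]
    · exact hiteri p i (by omega)
  have hfix : ∀ x : CyclotomicHecke n r q u, (⇑τ)^[p] x = x := by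
    intro x
    rw [← coe_pow, hτp]; rfl
  refine ⟨hfix, ?_⟩
  -- the automorphism
  have h₁ : τ.comp (τ ^ (p - 1)) = AlgHom.id ℂ (CyclotomicHecke n r q u) := by
    refine DFunLike.ext _ _ fun x => ?_
    rw [AlgHom.comp_apply, ← AlgHom.mul_apply, ← pow_succ', (by omega : p - 1 + 1 = p), hτp]
  have h₂ : (τ ^ (p - 1)).comp τ = AlgHom.id ℂ (CyclotomicHecke n r q u) := by
    refine DFunLike.ext _ _ fun x => ?_
    rw [AlgHom.comp_apply, ← AlgHom.mul_apply, ← pow_succ, (by omega : p - 1 + 1 = p), hτp]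
  set τe := AlgEquiv.ofAlgHom τ (τ ^ (p - 1)) h₁ h₂ with hτe
  have hτecoe : ⇑τe = ⇑τ := rfl
  refine ⟨τe, hτecoe, ?_⟩
  -- τe has order dividing p
  have hτep : τe ^ p = 1 := by
    have epow : ∀ m : ℕ, ⇑(τe ^ m) = (⇑τ)^[m] := by
      intro m
      induction m with
      | zero => funext x; simp
      | succ m ih =>
          funext x
          rw [pow_succ', AlgEquiv.aut_mul, AlgEquiv.trans_apply, Function.iterate_succ_apply', ← ih,
            hτecoe]
    refine AlgEquiv.ext fun x => ?_
    rw [AlgEquiv.one_apply]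
    rw [show ((τe ^ p) x) = (⇑τ)^[p] x from congrFun (epow p) x]
    exact hfix x
  -- the ℤ/p action
  have hzero : (zmultiplesHom
      (Additive (CyclotomicHecke n r q u ≃ₐ[ℂ] CyclotomicHecke n r q u))
      (Additive.ofMul τe)) ((p : ℕ) : ℤ) = 0 := by
    show ((p : ℕ) : ℤ) • Additive.ofMul τe = 0
    rw [← ofMul_zpow, zpow_natCast, hτep]
    rfl
  set ρ1 := ZMod.lift p ⟨zmultiplesHom
      (Additive (CyclotomicHecke n r q u ≃ₐ[ℂ] CyclotomicHecke n r q u))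
      (Additive.ofMul τe), hzero⟩ with hρ1
  refine ⟨⟨⟨fun x => (ρ1 x.toAdd).toMul, by simp⟩, fun x y => by simp⟩, ?_⟩
  show (ρ1 (Multiplicative.ofAdd (1 : ZMod p)).toAdd).toMul = τe
  have h1 : (Multiplicative.ofAdd (1 : ZMod p)).toAdd = (((1 : ℤ) : ZMod p)) := by simp
  rw [h1, hρ1, ZMod.lift_coe]
  show ((1 : ℤ) • Additive.ofMul τe).toMul = τe
  simp
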